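/- Assume the rate function r is strictly positive, satisfies r(z)·r(−z+1) = 1 for all z ∈ ℤ, and θ̄ := liminf_{n→∞} log r(n) > 0. Then the mean function u(θ) := ∑_{z∈ℤ} z·μ^{(θ)}(z) is differentiable at every θ ∈ (−θ̄, θ̄) with derivative u'(θ) = ∑_{z∈ℤ} z²·μ^{(θ)}(z) − (∑_{z∈ℤ} z·μ^{(θ)}(z))², this derivative is strictly positive, and consequently u is strictly increasing on (−θ̄, θ̄). -/
import Mathlib


open Real

/-- The generalized factorial `r(z)! := ∏_{y=1}^{|z|} r(y)`. -/
noncomputable def rfact (r : ℤ → ℝ) (z : ℤ) : ℝ :=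
  ∏ y ∈ Finset.range z.natAbs, r (y + 1)

/-- The partition function `Z(θ) := ∑_{z ∈ ℤ} e^{θ z} / r(z)!`. -/
noncomputable def Zfun (r : ℤ → ℝ) (θ : ℝ) : ℝ :=
  ∑' z : ℤ, Real.exp (θ * z) / rfact r z

/-- The single-site probability mass function `μ^{(θ)}(z) := e^{θ z} / (Z(θ) r(z)!)`. -/
noncomputable def mu (r : ℤ → ℝ) (θ : ℝ) (z : ℤ) : ℝ :=
  Real.exp (θ * z) / (Zfun r θ * rfact r z)

section aux
variable {r : ℤ → ℝ}

lemma rfact_pos (hpos : ∀ z : ℤ, 0 < r z) (z : ℤ) : 0 < rfact r z :=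
  Finset.prod_pos fun y _ => hpos _

lemma rfact_neg (n : ℕ) : rfact r (-(n:ℤ)) = rfact r n := by
  simp [rfact]

-- growth bound
lemma rfact_ge (hpos : ∀ z : ℤ, 0 < r z) {c' : ℝ} {N : ℕ}
    (hN : ∀ n : ℕ, N ≤ n → Real.exp c' < r (n:ℤ)) (n : ℕ) (hn : N ≤ n) :
    rfact r N * Real.exp c' ^ (n - N) ≤ rfact r n := by
  have h1 : rfact r n = rfact r N * ∏ y ∈ Finset.Ico N n, r (y + 1) := by
    rw [rfact, rfact]
    simp only [Int.natAbs_natCast]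
    rw [← Finset.prod_range_mul_prod_Ico _ hn]
  rw [h1]
  have h2 : Real.exp c' ^ (n - N) ≤ ∏ y ∈ Finset.Ico N n, r (y + 1) := by
    have := Finset.prod_le_prod (f := fun _ : ℕ => Real.exp c') (g := fun y : ℕ => r (y+1))
      (s := Finset.Ico N n) (fun _ _ => (Real.exp_pos _).le)
      (fun y hy => by
        have : N ≤ y + 1 := le_trans (Finset.mem_Ico.1 hy).1 (Nat.le_succ y)
        exact_mod_cast (hN (y+1) this).le)
    simpa [Nat.card_Ico] using this
  exact mul_le_mul_of_nonneg_left h2 (rfact_pos hpos N).le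
end aux

section sum
variable {r : ℤ → ℝ}

lemma summable_nat_aux (hpos : ∀ z : ℤ, 0 < r z) (k : ℕ) {c c' : ℝ} (hcc : c < c') {N : ℕ}
    (hN : ∀ n : ℕ, N ≤ n → Real.exp c' < r (n:ℤ)) :
    Summable (fun n : ℕ => (n:ℝ)^k * Real.exp (c*n) / rfact r (n:ℤ)) := by
  set ρ : ℝ := Real.exp (c - c') with hρ
  have hρ1 : ‖ρ‖ < 1 := by
    rw [Real.norm_eq_abs, abs_of_pos (Real.exp_pos _)]
    exact Real.exp_lt_one_iff.2 (by linarith)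
  have hgeo : Summable (fun n : ℕ => (n:ℝ)^k * ρ^n) :=
    summable_pow_mul_geometric_of_norm_lt_one k hρ1
  set C : ℝ := Real.exp (c' * N) / rfact r N with hC
  rw [← summable_nat_add_iff N]
  refine Summable.of_nonneg_of_le (fun j => ?_) (fun j => ?_)
    (((summable_nat_add_iff N).2 (hgeo.mul_left C)))
  · exact div_nonneg (by positivity) (rfact_pos hpos _).le
  · have hrf := rfact_ge hpos hN (j + N) (Nat.le_add_left N j)
    have hsub : j + N - N = j := by omega
    rw [hsub] at hrf
    have hden : (0:ℝ) < rfact r N * Real.exp c' ^ j :=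
      mul_pos (rfact_pos hpos N) (pow_pos (Real.exp_pos _) j)
    have step1 : ((j+N:ℕ):ℝ)^k * Real.exp (c*(j+N:ℕ)) / rfact r ((j+N:ℕ):ℤ)
        ≤ ((j+N:ℕ):ℝ)^k * Real.exp (c*(j+N:ℕ)) / (rfact r N * Real.exp c' ^ j) :=
      div_le_div_of_nonneg_left (by positivity) hden hrf
    refine step1.trans_eq ?_
    have hR : rfact r (N:ℤ) ≠ 0 := ne_of_gt (rfact_pos hpos N)
    rw [← Real.exp_nat_mul c' j, hρ, ← Real.exp_nat_mul (c - c') (j+N), hC]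
    push_cast
    have hexp : Real.exp (c * ((j:ℝ)+N)) = Real.exp (c' * N) * Real.exp (((j:ℝ)+N) * (c - c')) * Real.exp ((j:ℝ) * c') := by
      rw [← Real.exp_add, ← Real.exp_add]; congr 1; ring
    rw [hexp]
    field_simp

end sum

section sumint
variable {r : ℤ → ℝ}

lemma summable_int_aux (hpos : ∀ z : ℤ, 0 < r z) (k : ℕ) {c : ℝ}
    (hc : (c:EReal) < Filter.liminf (fun n : ℕ => (Real.log (r (n:ℤ)) : EReal)) Filter.atTop) :
    Summable (fun z : ℤ => |(z:ℝ)|^k * Real.exp (c * |(z:ℝ)|) / rfact r z) := by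
  obtain ⟨b, hcb, hbL⟩ := exists_between hc
  have hbt : b ≠ ⊤ := ne_top_of_lt hbL
  have hbb : b ≠ ⊥ := ne_bot_of_gt hcb
  lift b to ℝ using ⟨hbt, hbb⟩ with c'
  have hcc : c < c' := by exact_mod_cast hcb
  have hev : ∀ᶠ n : ℕ in Filter.atTop, (c' : EReal) < (Real.log (r (n:ℤ)) : EReal) :=
    Filter.eventually_lt_of_lt_liminf hbL
  obtain ⟨N, hN⟩ := Filter.eventually_atTop.1 hev
  have hN' : ∀ n : ℕ, N ≤ n → Real.exp c' < r (n:ℤ) := by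
    intro n hn
    have h1 : c' < Real.log (r (n:ℤ)) := by exact_mod_cast hN n hn
    have := Real.exp_lt_exp.2 h1
    rwa [Real.exp_log (hpos _)] at this
  have hnat := summable_nat_aux hpos k hcc hN'
  refine Summable.of_nat_of_neg_add_one ?_ ?_
  · refine hnat.congr fun n => ?_
    simp [abs_of_nonneg (n.cast_nonneg : (0:ℝ) ≤ n)]
  · refine ((summable_nat_add_iff 1).2 hnat).congr fun n => ?_
    have h1 : |((-((n:ℤ)+1) : ℤ) : ℝ)| = ((n+1:ℕ):ℝ) := by push_cast; rw [abs_of_nonpos] <;> push_cast <;> [ring; linarith [n.cast_nonneg (α := ℝ)]]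
    have h2 : rfact r (-((n:ℤ)+1)) = rfact r ((n+1:ℕ):ℤ) := by
      have := rfact_neg (r := r) (n+1); push_cast at this ⊢; exact this
    rw [h1, h2]

end sumint

noncomputable def F (r : ℤ → ℝ) (k : ℕ) (θ : ℝ) : ℝ :=
  ∑' z : ℤ, (z:ℝ)^k * Real.exp (θ * z) / rfact r z

section F
variable {r : ℤ → ℝ}

lemma summable_F (hpos : ∀ z : ℤ, 0 < r z) (k : ℕ) {θ : ℝ}
    (hθ : ((|θ|:ℝ):EReal) < Filter.liminf (fun n : ℕ => (Real.log (r (n:ℤ)) : EReal)) Filter.atTop) :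
    Summable (fun z : ℤ => (z:ℝ)^k * Real.exp (θ * z) / rfact r z) := by
  have hb := summable_int_aux hpos k hθ
  refine Summable.of_abs (Summable.of_nonneg_of_le (fun z => abs_nonneg _) (fun z => ?_) hb)
  rw [abs_div, abs_mul, abs_pow, abs_of_pos (Real.exp_pos _), abs_of_pos (rfact_pos hpos z)]
  have h : θ * z ≤ |θ| * |(z:ℝ)| := (le_abs_self _).trans_eq (abs_mul _ _)
  exact div_le_div₀ (by positivity) (mul_le_mul_of_nonneg_left (Real.exp_le_exp.2 h)
    (by positivity)) (rfact_pos hpos z) le_rfl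

lemma F_pos (hpos : ∀ z : ℤ, 0 < r z) (k : ℕ) {θ : ℝ}
    (hθ : ((|θ|:ℝ):EReal) < Filter.liminf (fun n : ℕ => (Real.log (r (n:ℤ)) : EReal)) Filter.atTop) :
    0 < F r (2*k) θ := by
  refine Summable.tsum_pos (summable_F hpos (2*k) hθ) (fun z => ?_) 1 ?_
  · have : (0:ℝ) ≤ (z:ℝ)^(2*k) := by rw [pow_mul]; positivity
    exact div_nonneg (mul_nonneg this (Real.exp_pos _).le) (rfact_pos hpos z).le
  · simp only [Int.cast_one, one_pow, one_mul]
    exact div_pos (Real.exp_pos _) (rfact_pos hpos 1)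

lemma hasDerivAt_F (hpos : ∀ z : ℤ, 0 < r z) (k : ℕ) {θ : ℝ}
    (hθ : ((|θ|:ℝ):EReal) < Filter.liminf (fun n : ℕ => (Real.log (r (n:ℤ)) : EReal)) Filter.atTop) :
    HasDerivAt (F r k) (F r (k+1) θ) θ := by
  obtain ⟨b, hcb, hbL⟩ := exists_between hθ
  lift b to ℝ using ⟨ne_top_of_lt hbL, ne_bot_of_gt hcb⟩ with c
  have hc : |θ| < c := by exact_mod_cast hcb
  have hu := summable_int_aux hpos (k+1) hbL
  have key : HasDerivAt (fun y : ℝ => ∑' z : ℤ, (z:ℝ)^k * Real.exp (y * z) / rfact r z)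
      (∑' z : ℤ, (z:ℝ)^(k+1) * Real.exp (θ * z) / rfact r z) θ := by
    refine hasDerivAt_tsum_of_isPreconnected hu isOpen_Ioo
      (isPreconnected_Ioo (a := -c) (b := c))
      (g := fun (z : ℤ) (y : ℝ) => (z:ℝ)^k * Real.exp (y * z) / rfact r z)
      (g' := fun (z : ℤ) (y : ℝ) => (z:ℝ)^(k+1) * Real.exp (y * z) / rfact r z)
      (fun z ϑ _ => ?_) (fun z ϑ hϑ => ?_) (abs_lt.1 hc) (summable_F hpos k hθ) (abs_lt.1 hc)
    · have h := (((hasDerivAt_id ϑ).mul_const ((z:ℝ))).exp.const_mul ((z:ℝ)^k)).div_const (rfact r z)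
      have hE : (z:ℝ)^k * (Real.exp (ϑ * z) * (1 * z)) / rfact r z
          = (z:ℝ)^(k+1) * Real.exp (ϑ * z) / rfact r z := by ring
      simp only [id] at h
      rwa [hE] at h
    · have hϑc : |ϑ| ≤ c := le_of_lt (abs_lt.2 hϑ)
      rw [Real.norm_eq_abs, abs_div, abs_mul, abs_pow, abs_of_pos (Real.exp_pos _),
        abs_of_pos (rfact_pos hpos z)]
      have h : ϑ * z ≤ c * |(z:ℝ)| :=
        ((le_abs_self _).trans_eq (abs_mul _ _)).trans
          (mul_le_mul_of_nonneg_right hϑc (abs_nonneg _))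
      exact div_le_div₀ (by positivity) (mul_le_mul_of_nonneg_left (Real.exp_le_exp.2 h)
        (by positivity)) (rfact_pos hpos z) le_rfl
  exact key

end F

section mu
variable {r : ℤ → ℝ}

lemma Zfun_eq (θ : ℝ) : Zfun r θ = F r 0 θ :=
  tsum_congr fun z => by rw [pow_zero, one_mul]

lemma tsum_mu_eq (k : ℕ) (ϑ : ℝ) :
    ∑' z : ℤ, (z:ℝ)^k * mu r ϑ z = F r k ϑ / F r 0 ϑ := by
  rw [F, ← tsum_div_const]
  refine tsum_congr fun z => ?_
  rw [mu, Zfun_eq]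
  ring

lemma summable_mu_pow (hpos : ∀ z : ℤ, 0 < r z) (k : ℕ) {θ : ℝ}
    (hθ : ((|θ|:ℝ):EReal) < Filter.liminf (fun n : ℕ => (Real.log (r (n:ℤ)) : EReal)) Filter.atTop) :
    Summable (fun z : ℤ => (z:ℝ)^k * mu r θ z) := by
  refine ((summable_F hpos k hθ).div_const (F r 0 θ)).congr fun z => ?_
  rw [mu, Zfun_eq]
  ring

lemma mu_pos (hpos : ∀ z : ℤ, 0 < r z) {θ : ℝ}
    (hθ : ((|θ|:ℝ):EReal) < Filter.liminf (fun n : ℕ => (Real.log (r (n:ℤ)) : EReal)) Filter.atTop)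
    (z : ℤ) : 0 < mu r θ z := by
  have hZ : 0 < Zfun r θ := by rw [Zfun_eq]; simpa using F_pos hpos 0 hθ
  exact div_pos (Real.exp_pos _) (mul_pos hZ (rfact_pos hpos z))

lemma variance_pos (hpos : ∀ z : ℤ, 0 < r z) {θ : ℝ}
    (hθ : ((|θ|:ℝ):EReal) < Filter.liminf (fun n : ℕ => (Real.log (r (n:ℤ)) : EReal)) Filter.atTop) :
    0 < (∑' z : ℤ, (z : ℝ) ^ 2 * mu r θ z) - (∑' z : ℤ, (z : ℝ) * mu r θ z) ^ 2 := by
  set m : ℝ := ∑' z : ℤ, (z : ℝ) * mu r θ z with hm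
  have hμ0 := summable_mu_pow hpos 0 hθ
  have hμ1 := summable_mu_pow hpos 1 hθ
  have hμ2 := summable_mu_pow hpos 2 hθ
  simp only [pow_zero, one_mul] at hμ0
  simp only [pow_one] at hμ1
  have hg : ∀ z : ℤ, ((z:ℝ) - m)^2 * mu r θ z
      = ((z:ℝ)^2 * mu r θ z - (2*m) * ((z:ℝ) * mu r θ z)) + m^2 * mu r θ z := fun z => by ring
  have hsum1 : Summable (fun z : ℤ => (z:ℝ)^2 * mu r θ z - (2*m) * ((z:ℝ) * mu r θ z)) :=
    hμ2.sub (hμ1.mul_left (2*m))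
  have hsg : Summable (fun z : ℤ => ((z:ℝ) - m)^2 * mu r θ z) :=
    (hsum1.add (hμ0.mul_left (m^2))).congr fun z => (hg z).symm
  have hμtot : ∑' z : ℤ, mu r θ z = 1 := by
    have h := tsum_mu_eq (r := r) 0 θ
    simp only [pow_zero, one_mul] at h
    rw [h, div_self (ne_of_gt (by simpa using F_pos hpos 0 hθ))]
  have htsum : ∑' z : ℤ, ((z:ℝ) - m)^2 * mu r θ z
      = (∑' z : ℤ, (z : ℝ) ^ 2 * mu r θ z) - m ^ 2 := by
    calc ∑' z : ℤ, ((z:ℝ) - m)^2 * mu r θ z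
        = ∑' z : ℤ, (((z:ℝ)^2 * mu r θ z - (2*m) * ((z:ℝ) * mu r θ z)) + m^2 * mu r θ z) :=
          tsum_congr hg
      _ = (∑' z : ℤ, ((z:ℝ)^2 * mu r θ z - (2*m) * ((z:ℝ) * mu r θ z)))
            + ∑' z : ℤ, m^2 * mu r θ z := Summable.tsum_add hsum1 (hμ0.mul_left (m^2))
      _ = ((∑' z : ℤ, (z:ℝ)^2 * mu r θ z) - ∑' z : ℤ, (2*m) * ((z:ℝ) * mu r θ z))
            + ∑' z : ℤ, m^2 * mu r θ z := by rw [Summable.tsum_sub hμ2 (hμ1.mul_left (2*m))]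
      _ = ((∑' z : ℤ, (z:ℝ)^2 * mu r θ z) - (2*m) * ∑' z : ℤ, (z:ℝ) * mu r θ z)
            + m^2 * ∑' z : ℤ, mu r θ z := by rw [tsum_mul_left, tsum_mul_left]
      _ = (∑' z : ℤ, (z : ℝ) ^ 2 * mu r θ z) - m ^ 2 := by rw [hμtot, ← hm]; ring
  rw [← htsum]
  set z₀ : ℤ := if (⌊m⌋ : ℝ) = m then ⌊m⌋ + 1 else ⌊m⌋ with hz₀
  have hz₀ne : ((z₀:ℝ) - m) ≠ 0 := by
    rw [hz₀]
    split_ifs with h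
    · push_cast
      rw [← h]; norm_num
    · intro hc
      exact h (by linarith [sub_eq_zero.1 hc])
  refine Summable.tsum_pos hsg (fun z => mul_nonneg (sq_nonneg _) (mu_pos hpos hθ z).le) z₀ ?_
  exact mul_pos (by positivity) (mu_pos hpos hθ z₀)

end mu

section main
variable {r : ℤ → ℝ}

lemma hasDerivAt_mean (hpos : ∀ z : ℤ, 0 < r z) {θ : ℝ}
    (hθ : ((|θ|:ℝ):EReal) < Filter.liminf (fun n : ℕ => (Real.log (r (n:ℤ)) : EReal)) Filter.atTop) :
    HasDerivAt (fun ϑ : ℝ => ∑' z : ℤ, (z : ℝ) * mu r ϑ z)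
      ((∑' z : ℤ, (z : ℝ) ^ 2 * mu r θ z) - (∑' z : ℤ, (z : ℝ) * mu r θ z) ^ 2) θ := by
  have hZ : 0 < F r 0 θ := by simpa using F_pos hpos 0 hθ
  have hD := (hasDerivAt_F hpos 1 hθ).div (hasDerivAt_F hpos 0 hθ) (ne_of_gt hZ)
  have hfun : (fun ϑ : ℝ => ∑' z : ℤ, (z : ℝ) * mu r ϑ z) = fun ϑ => F r 1 ϑ / F r 0 ϑ := by
    funext ϑ
    rw [← tsum_mu_eq 1 ϑ]
    exact tsum_congr fun z => by rw [pow_one]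
  have hval : (∑' z : ℤ, (z : ℝ) ^ 2 * mu r θ z) - (∑' z : ℤ, (z : ℝ) * mu r θ z) ^ 2
      = (F r (1+1) θ * F r 0 θ - F r 1 θ * F r 1 θ) / F r 0 θ ^ 2 := by
    have h1 : ∑' z : ℤ, (z : ℝ) * mu r θ z = F r 1 θ / F r 0 θ := by
      rw [← tsum_mu_eq 1 θ]; exact tsum_congr fun z => by rw [pow_one]
    rw [tsum_mu_eq 2 θ, h1]
    field_simp
  rw [hfun, hval]
  exact hD

end main

theorem mean_strictly_increasing (r : ℤ → ℝ) (hpos : ∀ z : ℤ, 0 < r z)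
    (hrel : ∀ z : ℤ, r z * r (-z + 1) = 1)
    (hθbar : 0 < Filter.liminf (fun n : ℕ => (Real.log (r (n : ℤ)) : EReal)) Filter.atTop) :
    (∀ θ : ℝ, ((|θ| : ℝ) : EReal) <
        Filter.liminf (fun n : ℕ => (Real.log (r (n : ℤ)) : EReal)) Filter.atTop →
      HasDerivAt (fun ϑ : ℝ => ∑' z : ℤ, (z : ℝ) * mu r ϑ z)
        ((∑' z : ℤ, (z : ℝ) ^ 2 * mu r θ z) - (∑' z : ℤ, (z : ℝ) * mu r θ z) ^ 2) θ ∧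
      0 < (∑' z : ℤ, (z : ℝ) ^ 2 * mu r θ z) - (∑' z : ℤ, (z : ℝ) * mu r θ z) ^ 2) ∧
    StrictMonoOn (fun ϑ : ℝ => ∑' z : ℤ, (z : ℝ) * mu r ϑ z)
      {θ : ℝ | ((|θ| : ℝ) : EReal) <
        Filter.liminf (fun n : ℕ => (Real.log (r (n : ℤ)) : EReal)) Filter.atTop} := by
  set L := Filter.liminf (fun n : ℕ => (Real.log (r (n : ℤ)) : EReal)) Filter.atTop with hL
  set S : Set ℝ := {θ : ℝ | ((|θ| : ℝ) : EReal) < L} with hS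
  refine ⟨fun θ hθ => ⟨hasDerivAt_mean hpos hθ, variance_pos hpos hθ⟩, ?_⟩
  have hSopen : IsOpen S := by
    have hc : Continuous (fun θ : ℝ => ((|θ| : ℝ) : EReal)) :=
      continuous_coe_real_ereal.comp continuous_abs
    exact isOpen_lt hc continuous_const
  have hSconv : Convex ℝ S := by
    intro x hx y hy a b ha hb hab
    simp only [hS, Set.mem_setOf_eq] at hx hy ⊢
    have habs : |a • x + b • y| ≤ max |x| |y| := by
      calc |a • x + b • y| ≤ a * |x| + b * |y| := by
            simp only [smul_eq_mul]
            refine (abs_add_le _ _).trans ?_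
            rw [abs_mul, abs_mul, abs_of_nonneg ha, abs_of_nonneg hb]
        _ ≤ a * max |x| |y| + b * max |x| |y| := by
            gcongr
            · exact le_max_left _ _
            · exact le_max_right _ _
        _ = max |x| |y| := by rw [← add_mul, hab, one_mul]
    have h2 : ((max |x| |y| : ℝ) : EReal) < L := by
      rcases max_cases |x| |y| with ⟨h, _⟩ | ⟨h, _⟩ <;> rw [h]
      · exact hx
      · exact hy
    exact lt_of_le_of_lt (by exact_mod_cast habs) h2
  refine strictMonoOn_of_deriv_pos hSconv ?_ ?_
  · intro x hx
    exact (hasDerivAt_mean hpos hx).continuousAt.continuousWithinAt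
  · intro x hx
    rw [hSopen.interior_eq] at hx
    rw [(hasDerivAt_mean hpos hx).deriv]
    exact variance_pos hpos hx
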